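/- Under the spectral gap assumption on P, let φ ∈ B be a bounded real-valued observable with ∫ φ dμ = 0, and set S_n = Σ_{k=0}^{n-1} φ∘T^k. Then the limit σ² = lim_{n→∞} ∫ (S_n/√n)² dμ exists, and σ² = ∫ φ² dμ + 2 Σ_{n=1}^{∞} ∫ φ·(φ∘Tⁿ) dμ, the series being absolutely convergent. -/

import Mathlib

/-!
Truncating `φ` on an `m`-null set we may assume it is bounded everywhere; since `T` is nonsingular
this changes no `φ ∘ Tⁿ` off a `μ`-null set. By duality between `P` and the Koopman operator, the
correlation `c n = ∫ φ · φ ∘ Tⁿ dμ` equals `∫ Pⁿ(φ v) · φ dm`, and since `φ v` has `m`-mean zero,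
`Pⁿ(φ v) = Qⁿ(φ v)`; hence `|c n| ≤ ‖φ‖_∞ ‖Qⁿ(φ v)‖`, which is summable by Gelfand's formula.
By `T`-invariance of `μ`, `∫ S_n² dμ = n c 0 + 2 ∑_{k<n} ∑_{i<k} c (i+1)`, so `∫ (S_n/√n)² dμ` is
`c 0` plus twice the Cesàro mean of the partial sums of `∑ c (i+1)`.
-/

open MeasureTheory Filter Topology
open scoped ENNReal

section

variable {X : Type*} [MeasurableSpace X] {m : Measure X}

lemma integral_withDensity_ofReal {u : X → ℝ} (hu : Measurable u) (g : X → ℝ) :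
    ∫ x, g x ∂m.withDensity (fun x => ENNReal.ofReal (u x)) = ∫ x, max (u x) 0 * g x ∂m := by
  rw [integral_withDensity_eq_integral_toReal_smul (by fun_prop)
    (ae_of_all _ fun _ => ENNReal.ofReal_lt_top)]
  simp only [ENNReal.toReal_ofReal', smul_eq_mul]

lemma integral_withDensity_ofReal_of_nonneg {u : X → ℝ} (hu : Measurable u) (hu0 : 0 ≤ᵐ[m] u)
    (g : X → ℝ) :
    ∫ x, g x ∂m.withDensity (fun x => ENNReal.ofReal (u x)) = ∫ x, u x * g x ∂m := by
  rw [integral_withDensity_ofReal hu]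
  exact integral_congr_ae (hu0.mono fun x (hx : 0 ≤ u x) => by simp only [max_eq_left hx])

lemma setIntegral_eq_withDensity_real_sub {u : X → ℝ} (hu : Integrable u m) {A : Set X}
    (hA : MeasurableSet A) :
    ∫ x in A, u x ∂m = (m.withDensity fun x => ENNReal.ofReal (u x)).real A
      - (m.withDensity fun x => ENNReal.ofReal (-u x)).real A := by
  rw [integral_eq_lintegral_pos_part_sub_lintegral_neg_part hu.restrict, measureReal_def,
    measureReal_def, withDensity_apply _ hA, withDensity_apply _ hA]

lemma integral_mul_eq_integral_withDensity_sub [IsFiniteMeasure m] {u : X → ℝ} (hu : Measurable u)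
    (hui : Integrable u m) {g : X → ℝ} (hg : Measurable g) {C : ℝ} (hgC : ∀ x, |g x| ≤ C) :
    ∫ x, u x * g x ∂m = ∫ x, g x ∂(m.withDensity fun x => ENNReal.ofReal (u x))
      - ∫ x, g x ∂(m.withDensity fun x => ENNReal.ofReal (-u x)) := by
  have hgb : ∀ᵐ x ∂m, ‖g x‖ ≤ C := ae_of_all _ hgC
  have hpos : Integrable (fun x => max (u x) 0 * g x) m :=
    hui.pos_part.mul_bdd hg.aestronglyMeasurable hgb
  have hneg : Integrable (fun x => max (-u x) 0 * g x) m :=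
    hui.neg.pos_part.mul_bdd hg.aestronglyMeasurable hgb
  rw [integral_withDensity_ofReal hu, integral_withDensity_ofReal (u := fun x => -u x) hu.neg,
    ← integral_sub hpos hneg]
  simp only [← sub_mul, max_zero_sub_max_neg_zero_eq_self]

theorem integral_mul_eq_integral_comp_mul_of_setIntegral_eq [IsFiniteMeasure m] {T : X → X}
    (hT : Measurable T) {u w : X → ℝ} (hu : Measurable u) (hw : Measurable w)
    (hui : Integrable u m) (hwi : Integrable w m)
    (h : ∀ A, MeasurableSet A → ∫ x in A, u x ∂m = ∫ x in T ⁻¹' A, w x ∂m)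
    {g : X → ℝ} (hg : Measurable g) {C : ℝ} (hgC : ∀ x, |g x| ≤ C) :
    ∫ x, u x * g x ∂m = ∫ x, w x * g (T x) ∂m := by
  set pos : (X → ℝ) → Measure X := fun f => m.withDensity fun x => ENNReal.ofReal (f x)
  have hfin : ∀ f : X → ℝ, Integrable f m → IsFiniteMeasure (pos f) := fun f hf =>
    isFiniteMeasure_withDensity_ofReal hf.2
  have := hfin u hui; have := hfin (-u) hui.neg; have := hfin w hwi; have := hfin (-w) hwi.neg
  -- the signed measures `u • m` and `T_* (w • m)` agree; moved so that no subtraction occurs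
  have hjordan : pos u + (pos (-w)).map T = pos (-u) + (pos w).map T := by
    ext1 A hA
    rw [← measureReal_eq_measureReal_iff, measureReal_add_apply, measureReal_add_apply,
      map_measureReal_apply hT hA, map_measureReal_apply hT hA]
    have := h A hA
    rw [setIntegral_eq_withDensity_real_sub hui hA,
      setIntegral_eq_withDensity_real_sub hwi (hT hA)] at this
    simp only [pos, Pi.neg_apply]
    linarith
  have hint : ∀ ν : Measure X, IsFiniteMeasure ν → Integrable g ν := fun ν _ =>
    (integrable_const C).mono' hg.aestronglyMeasurable (ae_of_all _ hgC)
  have hsum := congrArg (fun ν => ∫ x, g x ∂ν) hjordan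
  rw [integral_add_measure (hint _ inferInstance) (hint _ inferInstance),
    integral_add_measure (hint _ inferInstance) (hint _ inferInstance),
    integral_map hT.aemeasurable hg.aestronglyMeasurable,
    integral_map hT.aemeasurable hg.aestronglyMeasurable] at hsum
  rw [integral_mul_eq_integral_withDensity_sub hu hui hg hgC,
    integral_mul_eq_integral_withDensity_sub (g := fun x => g (T x)) hw hwi (hg.comp hT)
      fun x => hgC (T x)]
  simp only [pos, Pi.neg_apply] at hsum
  linarith

lemma integral_eq_zero_of_re_eq_mul_of_im_eq_zero {ψ : X → ℂ} (hψi : Integrable ψ m)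
    {ρ g : X → ℝ} (hρ : Measurable ρ) (hρ0 : 0 ≤ᵐ[m] ρ)
    (hψ : ∀ᵐ x ∂m, (ψ x).re = ρ x * g x ∧ (ψ x).im = 0)
    (hg : ∫ x, g x ∂m.withDensity (fun x => ENNReal.ofReal (ρ x)) = 0) :
    ∫ x, ψ x ∂m = 0 := by
  have hre : ∫ x, (ψ x).re ∂m = 0 := by
    rw [integral_congr_ae (hψ.mono fun x hx => hx.1), ← hg,
      integral_withDensity_ofReal_of_nonneg hρ hρ0]
  have him : ∫ x, (ψ x).im ∂m = 0 := integral_eq_zero_of_ae (hψ.mono fun x hx => hx.2)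
  rw [← integral_re_add_im hψi]
  simp [hre, him]

lemma setIntegral_re_eq_of_setIntegral_eq {T : X → X} {u w : X → ℂ} (hui : Integrable u m)
    (hwi : Integrable w m) (h : ∀ A, MeasurableSet A → ∫ x in A, u x ∂m = ∫ x in T ⁻¹' A, w x ∂m)
    (A : Set X) (hA : MeasurableSet A) :
    ∫ x in A, (u x).re ∂m = ∫ x in T ⁻¹' A, (w x).re ∂m := by
  have hre : ∀ {F : X → ℂ} (s : Set X), Integrable F m →
      ∫ x in s, (F x).re ∂m = (∫ x in s, F x ∂m).re := fun s hF => integral_re hF.restrict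
  rw [hre A hui, hre _ hwi, h A hA]

lemma integral_mul_comp_iterate_eq [IsFiniteMeasure m] {T : X → X} (hT : Measurable T)
    {f : ℕ → X → ℝ} (hf : ∀ n, Measurable (f n)) (hfi : ∀ n, Integrable (f n) m)
    (h : ∀ n A, MeasurableSet A → ∫ x in A, f (n + 1) x ∂m = ∫ x in T ⁻¹' A, f n x ∂m)
    {g : X → ℝ} (hg : Measurable g) {C : ℝ} (hgC : ∀ x, |g x| ≤ C) (n : ℕ) :
    ∫ x, f 0 x * g (T^[n] x) ∂m = ∫ x, f n x * g x ∂m := by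
  induction n generalizing g with
  | zero => rfl
  | succ n ih =>
    simp_rw [Function.iterate_succ_apply']
    rw [ih (g := fun x => g (T x)) (hg.comp hT) fun x => hgC (T x)]
    exact (integral_mul_eq_integral_comp_mul_of_setIntegral_eq hT (hf _) (hf _) (hfi _) (hfi _)
      (h n) hg hgC).symm

lemma measurePreserving_withDensity_ofReal {T : X → X} (hT : Measurable T) {v : X → ℝ}
    (hvi : Integrable v m) (hv0 : 0 ≤ᵐ[m] v)
    (h : ∀ A, MeasurableSet A → ∫ x in A, v x ∂m = ∫ x in T ⁻¹' A, v x ∂m) :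
    MeasurePreserving T (m.withDensity fun x => ENNReal.ofReal (v x))
      (m.withDensity fun x => ENNReal.ofReal (v x)) := by
  refine ⟨hT, Measure.ext fun A hA => ?_⟩
  rw [Measure.map_apply hT hA, withDensity_apply _ hA, withDensity_apply _ (hT hA),
    ← ofReal_integral_eq_lintegral_ofReal hvi.restrict (ae_restrict_of_ae hv0),
    ← ofReal_integral_eq_lintegral_ofReal hvi.restrict (ae_restrict_of_ae hv0), h A hA]

lemma quasiMeasurePreserving_of_preimage_null {T : X → X} (hT : Measurable T)
    (hns : ∀ A : Set X, MeasurableSet A → m A = 0 → m (T ⁻¹' A) = 0) :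
    Measure.QuasiMeasurePreserving T m m :=
  ⟨hT, Measure.AbsolutelyContinuous.mk fun A hA hA0 => by
    rw [Measure.map_apply hT hA]; exact hns A hA hA0⟩

lemma exists_measurable_abs_le_ae_eq [NeZero m] {f : X → ℝ} (hf : Measurable f) {K : ℝ}
    (hK : ∀ᵐ x ∂m, |f x| ≤ K) : ∃ g : X → ℝ, Measurable g ∧ (∀ x, |g x| ≤ K) ∧ g =ᵐ[m] f := by
  refine ⟨fun x => max (-K) (min (f x) K), by fun_prop, fun x => abs_le.mpr ⟨le_max_left _ _,
    max_le ?_ (min_le_right _ _)⟩, ?_⟩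
  · obtain ⟨y, hy⟩ := hK.exists
    linarith [abs_nonneg (f y)]
  · filter_upwards [hK] with x hx
    rw [abs_le] at hx
    simp only [min_eq_left hx.2, max_eq_right hx.1]

end

lemma summable_norm_pow_of_spectralRadius_lt_one {A : Type*} [NormedRing A] [NormedAlgebra ℂ A]
    [CompleteSpace A] {a : A} (ha : spectralRadius ℂ a < 1) :
    Summable fun n : ℕ => ‖a ^ n‖ := by
  obtain ⟨r, hr0, hρr, hr1⟩ := ENNReal.lt_iff_exists_real_btwn.mp ha
  rw [← ENNReal.ofReal_one, ENNReal.ofReal_lt_ofReal_iff one_pos] at hr1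
  refine .of_norm_bounded_eventually_nat (summable_geometric_of_lt_one hr0 hr1) ?_
  filter_upwards [(spectrum.pow_norm_pow_one_div_tendsto_nhds_spectralRadius a).eventually_lt_const
    hρr, eventually_ne_atTop 0] with n hroot hn
  rw [ENNReal.ofReal_lt_ofReal_iff_of_nonneg (by positivity), one_div] at hroot
  rw [norm_norm, ← Real.rpow_inv_natCast_pow (norm_nonneg (a ^ n)) hn]
  exact pow_le_pow_left₀ (by positivity) hroot.le n

lemma ContinuousLinearMap.summable_norm_apply_pow_apply {E F : Type*} [NormedAddCommGroup E]
    [NormedSpace ℂ E] [CompleteSpace E] [NormedAddCommGroup F] [NormedSpace ℂ F]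
    (ι : E →L[ℂ] F) {Q : E →L[ℂ] E} (hQ : spectralRadius ℂ Q < 1) (ψ : E) :
    Summable fun n : ℕ => ‖ι ((Q ^ n) ψ)‖ :=
  .of_nonneg_of_le (fun _ => norm_nonneg _)
    (fun n => (ι.le_opNorm _).trans (mul_le_mul_of_nonneg_left ((Q ^ n).le_opNorm ψ)
      (norm_nonneg _)))
    (((summable_norm_pow_of_spectralRadius_lt_one hQ).mul_right ‖ψ‖).mul_left ‖ι‖)

open Finset in
lemma sum_range_sum_range_eq_of_toeplitz (a : ℕ → ℕ → ℝ) (c : ℕ → ℝ)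
    (hsymm : ∀ j k, a j k = a k j) (hc : ∀ j d, a j (j + d) = c d) (n : ℕ) :
    ∑ j ∈ range n, ∑ k ∈ range n, a j k
      = n * c 0 + 2 * ∑ k ∈ range n, ∑ i ∈ range k, c (i + 1) := by
  induction n with
  | zero => simp
  | succ n ih =>
    have hcol : ∑ j ∈ range n, a j n = ∑ i ∈ range n, c (i + 1) := by
      rw [← sum_range_reflect]
      refine sum_congr rfl fun j hj => ?_
      have hj := mem_range.mp hj
      rw [← hc]
      congr 1
      omega
    have hrow : ∑ k ∈ range n, a n k = ∑ j ∈ range n, a j n :=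
      sum_congr rfl fun k _ => hsymm n k
    have hdiag : a n n = c 0 := hc n 0
    simp only [sum_range_succ, sum_add_distrib, ih, hrow, hcol, hdiag]
    push_cast
    ring

section Stationary

open Finset

variable {Ω : Type*} [MeasurableSpace Ω]

noncomputable def autocorrelation (μ : Measure Ω) (T : Ω → Ω) (g : Ω → ℝ) (n : ℕ) : ℝ :=
  ∫ x, g x * g (T^[n] x) ∂μ

variable {μ : Measure Ω} {T : Ω → Ω} {g : Ω → ℝ}

lemma MeasureTheory.MeasurePreserving.integral_comp_iterate_mul_comp_iterate_add
    (hT : MeasurePreserving T μ μ) (hg : Measurable g) (j d : ℕ) :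
    ∫ x, g (T^[j] x) * g (T^[j + d] x) ∂μ = autocorrelation μ T g d := by
  have hG : Measurable fun x => g x * g (T^[d] x) := hg.mul (hg.comp (hT.measurable.iterate d))
  rw [autocorrelation]
  conv_rhs => rw [← (hT.iterate j).map_eq,
    integral_map (hT.measurable.iterate j).aemeasurable hG.aestronglyMeasurable]
  simp only [add_comm j d, Function.iterate_add_apply]

lemma integral_sq_birkhoffSum [IsFiniteMeasure μ] (hT : MeasurePreserving T μ μ)
    (hg : Measurable g) {K : ℝ} (hgK : ∀ x, |g x| ≤ K) (n : ℕ) :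
    ∫ x, birkhoffSum T g n x ^ 2 ∂μ = n * autocorrelation μ T g 0
      + 2 * ∑ k ∈ range n, ∑ i ∈ range k, autocorrelation μ T g (i + 1) := by
  have hint : ∀ j k, Integrable (fun x => g (T^[j] x) * g (T^[k] x)) μ := fun j k =>
    .of_bound ((hg.comp (hT.measurable.iterate j)).mul
      (hg.comp (hT.measurable.iterate k))).aestronglyMeasurable (K * K) (ae_of_all _ fun x => by
      rw [Real.norm_eq_abs, abs_mul]
      exact mul_le_mul (hgK _) (hgK _) (abs_nonneg _) ((abs_nonneg _).trans (hgK x)))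
  simp_rw [birkhoffSum, sq, sum_mul_sum]
  rw [integral_finsetSum _ fun j _ => integrable_finsetSum _ fun k _ => hint j k]
  simp_rw [integral_finsetSum _ fun k _ => hint _ k]
  exact sum_range_sum_range_eq_of_toeplitz _ _
    (fun j k => integral_congr_ae (ae_of_all _ fun _ => mul_comm _ _))
    (hT.integral_comp_iterate_mul_comp_iterate_add hg) n

theorem tendsto_integral_sq_birkhoffSum_div_sqrt [IsFiniteMeasure μ]
    (hT : MeasurePreserving T μ μ) (hg : Measurable g) {K : ℝ} (hgK : ∀ x, |g x| ≤ K)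
    (hsum : Summable fun i => autocorrelation μ T g (i + 1)) :
    Tendsto (fun n : ℕ => ∫ x, (birkhoffSum T g n x / √n) ^ 2 ∂μ) atTop
      (𝓝 (autocorrelation μ T g 0 + 2 * ∑' i, autocorrelation μ T g (i + 1))) := by
  refine ((hsum.hasSum.tendsto_sum_nat.cesaro.const_mul 2).const_add _).congr' ?_
  filter_upwards [eventually_ne_atTop 0] with n hn
  simp_rw [div_pow, Real.sq_sqrt n.cast_nonneg]
  rw [integral_div, integral_sq_birkhoffSum hT hg hgK]
  field_simp

end Stationary

section SpectralGap

variable {X : Type*} [MeasurableSpace X] {m : Measure X}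
  {B : Type*} [NormedAddCommGroup B] [NormedSpace ℂ B] (ι : B →L[ℂ] Lp ℂ 1 m)

lemma abs_integral_re_mul_le {g : X → ℝ} {K : ℝ} (hgK : ∀ x, |g x| ≤ K) (F : Lp ℂ 1 m) :
    |∫ x, (F x).re * g x ∂m| ≤ K * ‖F‖ := by
  calc |∫ x, (F x).re * g x ∂m| ≤ ∫ x, K * ‖F x‖ ∂m :=
        norm_integral_le_of_norm_le ((L1.integrable_coeFn F).norm.const_mul K)
          (ae_of_all _ fun x => by
            rw [Real.norm_eq_abs, abs_mul, mul_comm]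
            exact mul_le_mul (hgK x) (Complex.abs_re_le_norm _) (abs_nonneg _)
              ((abs_nonneg _).trans (hgK x)))
    _ = K * ‖F‖ := by rw [integral_const_mul, L1.norm_eq_integral_norm]

theorem abs_integral_re_mul_comp_iterate_le [IsFiniteMeasure m] {T : X → X} (hT : Measurable T)
    {PB Q : B →L[ℂ] B}
    (hPB : ∀ (f : B) (A : Set X), MeasurableSet A →
      ∫ x in A, (ι (PB f) : X → ℂ) x ∂m = ∫ x in T ⁻¹' A, (ι f : X → ℂ) x ∂m)
    {v : B} (hdecomp : ∀ f : B, PB f = (∫ x, (ι f : X → ℂ) x ∂m) • v + Q f)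
    (hQm : ∀ f : B, ∫ x, (ι (Q f) : X → ℂ) x ∂m = 0)
    {ψ : B} (hψ : ∫ x, (ι ψ : X → ℂ) x ∂m = 0)
    {g : X → ℝ} (hg : Measurable g) {K : ℝ} (hgK : ∀ x, |g x| ≤ K) (n : ℕ) :
    |∫ x, ((ι ψ : X → ℂ) x).re * g (T^[n] x) ∂m| ≤ K * ‖ι ((Q ^ n) ψ)‖ := by
  have hPQ : ∀ n, PB ((Q ^ n) ψ) = (Q ^ (n + 1)) ψ := by
    intro n
    have hmean : ∫ x, (ι ((Q ^ n) ψ) : X → ℂ) x ∂m = 0 := by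
      cases n with
      | zero => exact hψ
      | succ n => rw [pow_succ', mul_apply_eq_comp]; exact hQm _
    rw [hdecomp, hmean, zero_smul, zero_add, pow_succ', mul_apply_eq_comp]
  set f : ℕ → X → ℝ := fun n x => ((ι ((Q ^ n) ψ) : X → ℂ) x).re
  have hf : ∀ n, Measurable (f n) := fun n =>
    Complex.measurable_re.comp (Lp.stronglyMeasurable _).measurable
  have hfi : ∀ n, Integrable (f n) m := fun n => (L1.integrable_coeFn (ι ((Q ^ n) ψ))).re
  have hstep : ∀ n A, MeasurableSet A → ∫ x in A, f (n + 1) x ∂m = ∫ x in T ⁻¹' A, f n x ∂m := by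
    intro n
    simp only [f, ← hPQ]
    exact setIntegral_re_eq_of_setIntegral_eq (L1.integrable_coeFn _) (L1.integrable_coeFn _)
      (hPB _)
  calc |∫ x, ((ι ψ : X → ℂ) x).re * g (T^[n] x) ∂m|
      = |∫ x, f n x * g x ∂m| := by
        rw [← integral_mul_comp_iterate_eq hT hf hfi hstep hg hgK n]; rfl
    _ ≤ K * ‖ι ((Q ^ n) ψ)‖ := abs_integral_re_mul_le hgK _

theorem summable_abs_autocorrelation_withDensity [CompleteSpace B] [IsFiniteMeasure m] {T : X → X}
    (hT : Measurable T) {PB Q : B →L[ℂ] B}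
    (hPB : ∀ (f : B) (A : Set X), MeasurableSet A →
      ∫ x in A, (ι (PB f) : X → ℂ) x ∂m = ∫ x in T ⁻¹' A, (ι f : X → ℂ) x ∂m)
    {v : B} (hdecomp : ∀ f : B, PB f = (∫ x, (ι f : X → ℂ) x ∂m) • v + Q f)
    (hQm : ∀ f : B, ∫ x, (ι (Q f) : X → ℂ) x ∂m = 0) (hQ : spectralRadius ℂ Q < 1)
    {ρ : X → ℝ} (hρ : Measurable ρ) (hρ0 : 0 ≤ᵐ[m] ρ)
    {g : X → ℝ} (hg : Measurable g) {K : ℝ} (hgK : ∀ x, |g x| ≤ K)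
    (hgmean : ∫ x, g x ∂m.withDensity (fun x => ENNReal.ofReal (ρ x)) = 0)
    {ψ : B} (hψ : ∀ᵐ x ∂m, ((ι ψ : X → ℂ) x).re = ρ x * g x ∧ ((ι ψ : X → ℂ) x).im = 0) :
    Summable fun n =>
      |autocorrelation (m.withDensity fun x => ENNReal.ofReal (ρ x)) T g (n + 1)| := by
  have hψmean := integral_eq_zero_of_re_eq_mul_of_im_eq_zero (L1.integrable_coeFn _) hρ hρ0 hψ
    hgmean
  have hdecay : ∀ n, |autocorrelation (m.withDensity fun x => ENNReal.ofReal (ρ x)) T g n|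
      ≤ K * ‖ι ((Q ^ n) ψ)‖ := fun n => by
    have hψρ : ∫ x, ρ x * (g x * g (T^[n] x)) ∂m
        = ∫ x, ((ι ψ : X → ℂ) x).re * g (T^[n] x) ∂m :=
      integral_congr_ae (hψ.mono fun x hx => by simp only [hx.1, mul_assoc])
    rw [autocorrelation, integral_withDensity_ofReal_of_nonneg hρ hρ0, hψρ]
    exact abs_integral_re_mul_comp_iterate_le ι hT hPB hdecomp hQm hψmean hg hgK n
  exact .of_nonneg_of_le (fun _ => abs_nonneg _) (fun n => hdecay (n + 1))
    (((summable_nat_add_iff 1).2 (ι.summable_norm_apply_pow_apply hQ ψ)).mul_left K)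

end SpectralGap

theorem stmt_5_general
    {X : Type*} [MeasurableSpace X] (m : Measure X) [IsProbabilityMeasure m]
    (T : X → X) (hT : Measurable T)
    (hns : ∀ A : Set X, MeasurableSet A → m A = 0 → m (T ⁻¹' A) = 0)
    -- B is a complex Banach space continuously embedded in L¹(m)
    {B : Type*} [NormedAddCommGroup B] [NormedSpace ℂ B] [CompleteSpace B]
    (ι : B →L[ℂ] Lp ℂ 1 m)
    -- B is a Banach algebra : mulB is the pointwise multiplication, a continuous
    -- bilinear map (hence ∃ C > 0, ‖f*g‖_B ≤ C ‖f‖_B ‖g‖_B with C = ‖mulB‖)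
    (mulB : B →L[ℂ] B →L[ℂ] B)
    (hmulB : ∀ f g : B, ∀ᵐ x ∂m,
        (ι (mulB f g) : X → ℂ) x = (ι f : X → ℂ) x * (ι g : X → ℂ) x)
    -- P(B) ⊂ B and P restricted to B is bounded : PB is the restriction to B of the
    -- Perron-Frobenius operator P f = d m_f / dm, m_f (A) = ∫_{T⁻¹A} f dm
    (PB : B →L[ℂ] B)
    (hPB : ∀ (f : B) (A : Set X), MeasurableSet A →
        ∫ x in A, (ι (PB f) : X → ℂ) x ∂m = ∫ x in T ⁻¹' A, (ι f : X → ℂ) x ∂m)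
    -- spectral gap : 1 is a simple eigenvalue of P on B and the only eigenvalue of
    -- modulus 1, so P f = ⟨m,f⟩ v + Q f with v the invariant density and Q of
    -- spectral radius < 1, Q v = 0, ⟨m, Q f⟩ = 0
    (v : B) (hv0 : ∀ᵐ x ∂m, 0 ≤ ((ι v : X → ℂ) x).re ∧ ((ι v : X → ℂ) x).im = 0)
    (hvfix : PB v = v)
    (Q : B →L[ℂ] B) (hQrad : spectralRadius ℂ (Q : B →L[ℂ] B) < 1)
    (hQm : ∀ f : B, ∫ x, (ι (Q f) : X → ℂ) x ∂m = 0)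
    (hdecomp : ∀ f : B, PB f = (∫ x, (ι f : X → ℂ) x ∂m) • v + Q f)
    -- μ = v · m is the unique T-invariant a.c.i.p. with density in B
    (μ : Measure X)
    (hμ : μ = m.withDensity fun x => ENNReal.ofReal ((ι v : X → ℂ) x).re)
    -- φ ∈ B is a bounded real-valued observable with ∫ φ dμ = 0
    (φ : B) (hφreal : ∀ᵐ x ∂m, ((ι φ : X → ℂ) x).im = 0)
    (hφbdd : ∃ K : ℝ, ∀ᵐ x ∂m, ‖(ι φ : X → ℂ) x‖ ≤ K)
    (hφmean : ∫ x, ((ι φ : X → ℂ) x).re ∂μ = 0)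
    -- S n = Σ_{k<n} φ ∘ T^k are the Birkhoff sums of φ
    (S : ℕ → X → ℝ)
    (hS : ∀ (n : ℕ) (x : X), S n x = ∑ k ∈ Finset.range n, ((ι φ : X → ℂ) (T^[k] x)).re)
    :
    ∃ σ2 : ℝ,
      Tendsto (fun n : ℕ => ∫ x, (S n x / Real.sqrt n) ^ 2 ∂μ) atTop (𝓝 σ2) ∧
      Summable (fun n : ℕ =>
        |∫ x, ((ι φ : X → ℂ) x).re * ((ι φ : X → ℂ) (T^[n + 1] x)).re ∂μ|) ∧
      σ2 = (∫ x, (((ι φ : X → ℂ) x).re) ^ 2 ∂μ) +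
        2 * ∑' n : ℕ, ∫ x, ((ι φ : X → ℂ) x).re * ((ι φ : X → ℂ) (T^[n + 1] x)).re ∂μ := by
  obtain ⟨K, hK⟩ := hφbdd
  have hre : ∀ F : Lp ℂ 1 m, Measurable fun x => (F x).re := fun F =>
    Complex.measurable_re.comp (Lp.stronglyMeasurable F).measurable
  obtain ⟨g, hg, hgK, hgφ⟩ := exists_measurable_abs_le_ae_eq (hre (ι φ))
    (hK.mono fun x hx => (Complex.abs_re_le_norm _).trans hx)
  have hv0re : 0 ≤ᵐ[m] fun x => ((ι v : X → ℂ) x).re := hv0.mono fun x hx => hx.1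
  have hvint : Integrable (fun x => ((ι v : X → ℂ) x).re) m := (L1.integrable_coeFn (ι v)).re
  have hvinv := setIntegral_re_eq_of_setIntegral_eq (L1.integrable_coeFn _)
    (L1.integrable_coeFn _) (hPB v)
  rw [hvfix] at hvinv
  have hμT : MeasurePreserving T μ μ :=
    hμ ▸ measurePreserving_withDensity_ofReal hT hvint hv0re hvinv
  have : IsFiniteMeasure μ := hμ ▸ isFiniteMeasure_withDensity_ofReal hvint.2
  have hgφT : ∀ k, (fun x => g (T^[k] x)) =ᵐ[μ] fun x => ((ι φ : X → ℂ) (T^[k] x)).re :=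
    fun k => (hμ ▸ withDensity_absolutelyContinuous _ _ : μ ≪ m).ae_le
      (((quasiMeasurePreserving_of_preimage_null hT hns).iterate k).ae_eq hgφ)
  have hψ : ∀ᵐ x ∂m, ((ι (mulB φ v) : X → ℂ) x).re = ((ι v : X → ℂ) x).re * g x ∧
      ((ι (mulB φ v) : X → ℂ) x).im = 0 := by
    filter_upwards [hmulB φ v, hφreal, hv0, hgφ] with x hψx hφx hvx hgx
    simp only [hψx, Complex.mul_re, Complex.mul_im, hφx, hvx.2, hgx]
    constructor <;> ring
  have hsum : Summable fun n => |autocorrelation μ T g (n + 1)| := hμ ▸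
    summable_abs_autocorrelation_withDensity ι hT hPB hdecomp hQm hQrad (hre _) hv0re hg hgK
      (by rw [← hμ, ← hφmean]; exact integral_congr_ae (hgφT 0)) hψ
  have hcφ : ∀ n, autocorrelation μ T g n
      = ∫ x, ((ι φ : X → ℂ) x).re * ((ι φ : X → ℂ) (T^[n] x)).re ∂μ := fun n =>
    integral_congr_ae ((hgφT 0).mul (hgφT n))
  refine ⟨autocorrelation μ T g 0 + 2 * ∑' i, autocorrelation μ T g (i + 1), ?_,
    by simpa only [hcφ] using hsum, by simp only [hcφ, sq, Function.iterate_zero_apply]⟩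
  refine (tendsto_integral_sq_birkhoffSum_div_sqrt hμT hg hgK hsum.of_abs).congr fun n => ?_
  refine integral_congr_ae ?_
  filter_upwards [ae_all_iff.2 hgφT] with x hx
  simp only [birkhoffSum, hS, hx]

/-- Existence of the asymptotic variance : `σ² = lim ∫ (S_n/√n)² dμ` exists,
equals `∫ φ² dμ + 2 Σ_{n≥1} ∫ φ (φ∘Tⁿ) dμ`, the series being absolutely convergent. -/
theorem stmt_5
    {X : Type*} [MeasurableSpace X] (m : Measure X) [IsProbabilityMeasure m]
    (T : X → X) (hT : Measurable T)
    (hns : ∀ A : Set X, MeasurableSet A → m A = 0 → m (T ⁻¹' A) = 0)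
    -- B is a complex Banach space continuously embedded in L¹(m)
    {B : Type*} [NormedAddCommGroup B] [NormedSpace ℂ B] [CompleteSpace B]
    (ι : B →L[ℂ] Lp ℂ 1 m) (hι : Function.Injective ι)
    -- constant functions lie in B
    (oneB : B) (honeB : ∀ᵐ x ∂m, (ι oneB : X → ℂ) x = 1)
    -- B is a Banach algebra : mulB is the pointwise multiplication, a continuous
    -- bilinear map (hence ∃ C > 0, ‖f*g‖_B ≤ C ‖f‖_B ‖g‖_B with C = ‖mulB‖)
    (mulB : B →L[ℂ] B →L[ℂ] B)
    (hmulB : ∀ f g : B, ∀ᵐ x ∂m,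
        (ι (mulB f g) : X → ℂ) x = (ι f : X → ℂ) x * (ι g : X → ℂ) x)
    -- B is a complex Banach lattice : stable under conjugation and modulus
    (conjB : B → B)
    (hconjB : ∀ f : B, ∀ᵐ x ∂m, (ι (conjB f) : X → ℂ) x = starRingEnd ℂ ((ι f : X → ℂ) x))
    (absB : B → B)
    (habsB : ∀ f : B, ∀ᵐ x ∂m,
        (ι (absB f) : X → ℂ) x = (‖(ι f : X → ℂ) x‖ : ℂ))
    -- P(B) ⊂ B and P restricted to B is bounded : PB is the restriction to B of the
    -- Perron-Frobenius operator P f = d m_f / dm, m_f (A) = ∫_{T⁻¹A} f dm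
    (PB : B →L[ℂ] B)
    (hPB : ∀ (f : B) (A : Set X), MeasurableSet A →
        ∫ x in A, (ι (PB f) : X → ℂ) x ∂m = ∫ x in T ⁻¹' A, (ι f : X → ℂ) x ∂m)
    -- the spectral radius of P on B is 1
    (hrad : spectralRadius ℂ (PB : B →L[ℂ] B) = 1)
    -- spectral gap : 1 is a simple eigenvalue of P on B and the only eigenvalue of
    -- modulus 1, so P f = ⟨m,f⟩ v + Q f with v the invariant density and Q of
    -- spectral radius < 1, Q v = 0, ⟨m, Q f⟩ = 0
    (v : B) (hv0 : ∀ᵐ x ∂m, 0 ≤ ((ι v : X → ℂ) x).re ∧ ((ι v : X → ℂ) x).im = 0)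
    (hv1 : ∫ x, (ι v : X → ℂ) x ∂m = 1) (hvfix : PB v = v)
    (Q : B →L[ℂ] B) (hQrad : spectralRadius ℂ (Q : B →L[ℂ] B) < 1)
    (hQv : Q v = 0) (hQm : ∀ f : B, ∫ x, (ι (Q f) : X → ℂ) x ∂m = 0)
    (hdecomp : ∀ f : B, PB f = (∫ x, (ι f : X → ℂ) x ∂m) • v + Q f)
    -- μ = v · m is the unique T-invariant a.c.i.p. with density in B
    (μ : Measure X)
    (hμ : μ = m.withDensity fun x => ENNReal.ofReal ((ι v : X → ℂ) x).re)
    -- φ ∈ B is a bounded real-valued observable with ∫ φ dμ = 0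
    (φ : B) (hφreal : ∀ᵐ x ∂m, ((ι φ : X → ℂ) x).im = 0)
    (hφbdd : ∃ K : ℝ, ∀ᵐ x ∂m, ‖(ι φ : X → ℂ) x‖ ≤ K)
    (hφmean : ∫ x, ((ι φ : X → ℂ) x).re ∂μ = 0)
    -- S n = Σ_{k<n} φ ∘ T^k are the Birkhoff sums of φ
    (S : ℕ → X → ℝ)
    (hS : ∀ (n : ℕ) (x : X), S n x = ∑ k ∈ Finset.range n, ((ι φ : X → ℂ) (T^[k] x)).re)
    :
    ∃ σ2 : ℝ,
      Tendsto (fun n : ℕ => ∫ x, (S n x / Real.sqrt n) ^ 2 ∂μ) atTop (𝓝 σ2) ∧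
      Summable (fun n : ℕ =>
        |∫ x, ((ι φ : X → ℂ) x).re * ((ι φ : X → ℂ) (T^[n + 1] x)).re ∂μ|) ∧
      σ2 = (∫ x, (((ι φ : X → ℂ) x).re) ^ 2 ∂μ) +
        2 * ∑' n : ℕ, ∫ x, ((ι φ : X → ℂ) x).re * ((ι φ : X → ℂ) (T^[n + 1] x)).re ∂μ :=
  stmt_5_general m T hT hns ι mulB hmulB PB hPB v hv0 hvfix Q hQrad hQm hdecomp μ hμ φ hφreal hφbdd
    hφmean S hS
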